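/- arXiv:2602.19408 — 5 statements merged into one kernel-verified Lean document; each statement's English description precedes it below -/
import Mathlib

section
/- Let G = (V, E) be a finite directed graph, M' a matching of its split bipartite graph G', and F ⊆ E the set of edges (u, v) of G with (f_L(u), f_R(v)) ∈ M'. Then the number of weakly connected components of G_F = (V, F) that are simple directed paths (counting single vertices as paths, and not counting cycle components) equals |V| − |M'|. -/
/-!
Since `M` is a matching, the pulled-back digraph `F` has in- and out-degree at most one
everywhere, and `|F| = |M|`. Such a digraph is a disjoint union of directed paths and cycles.
Each path component contains exactly one sink (its last vertex) and a cycle contains none, so the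
path components are counted by the sinks. As distinct edges of `F` have distinct tails, the
non-sinks are in bijection with `F`, leaving `|V| - |F|` sinks.
-/

open scoped Classical

variable {V : Type*} [DecidableEq V]

/-- In-degree of `v` in the digraph with edge set `E`. -/
def indeg (E : Finset (V × V)) (v : V) : ℕ := (E.filter (fun e => e.2 = v)).card

/-- Out-degree of `v` in the digraph with edge set `E`. -/
def outdeg (E : Finset (V × V)) (v : V) : ℕ := (E.filter (fun e => e.1 = v)).card

/-- `l` is a simple directed path (possibly a single vertex) in the digraph `E`. -/
def IsDiPath (E : Finset (V × V)) (l : List V) : Prop :=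
  l ≠ [] ∧ l.Nodup ∧ l.Chain' (fun u v => (u, v) ∈ E)

/-- `l` is a simple directed cycle in the digraph `E`. -/
def IsDiCycle (E : Finset (V × V)) (l : List V) : Prop :=
  ∃ h : l ≠ [], l.Nodup ∧ l.Chain' (fun u v => (u, v) ∈ E) ∧
    (l.getLast h, l.head h) ∈ E

/-- A path-and-cycle cover (PC cover) of the digraph `E`. -/
structure PCCover (E : Finset (V × V)) where
  paths : Finset (List V)
  cycles : Finset (List V)
  paths_are : ∀ l ∈ paths, IsDiPath E l
  cycles_are : ∀ l ∈ cycles, IsDiCycle E l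
  disj : Disjoint paths cycles
  pairwiseDisj : ∀ l₁ ∈ paths ∪ cycles, ∀ l₂ ∈ paths ∪ cycles, l₁ ≠ l₂ → ∀ v ∈ l₁, v ∉ l₂
  covers : ∀ v : V, ∃ l ∈ paths ∪ cycles, v ∈ l

/-- Edge set of the split bipartite graph of the digraph `E`, on vertex set `V ⊕ V`
(`Sum.inl` is the left copy `f_L`, `Sum.inr` the right copy `f_R`). -/
def splitEdges (E : Finset (V × V)) : Finset ((V ⊕ V) × (V ⊕ V)) :=
  E.image (fun e => (Sum.inl e.1, Sum.inr e.2))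

/-- A set of edges is a matching if no two of its edges share an endpoint. -/
def IsMatching {W : Type*} (M : Finset (W × W)) : Prop :=
  ∀ e₁ ∈ M, ∀ e₂ ∈ M, e₁ ≠ e₂ →
    e₁.1 ≠ e₂.1 ∧ e₁.1 ≠ e₂.2 ∧ e₁.2 ≠ e₂.1 ∧ e₁.2 ≠ e₂.2

/-- The set `F ⊆ E` of edges of `G` pulled back from a matching of the split bipartite graph. -/
def pullback (E : Finset (V × V)) (M : Finset ((V ⊕ V) × (V ⊕ V))) : Finset (V × V) :=
  E.filter (fun e => (Sum.inl e.1, Sum.inr e.2) ∈ M)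

/-- Weak reachability (reachability after forgetting edge directions) in the digraph `F`. -/
def WReach (F : Finset (V × V)) (a b : V) : Prop :=
  Relation.ReflTransGen (fun x y => (x, y) ∈ F ∨ (y, x) ∈ F) a b

/-- The consecutive-pair edges of a list of vertices. -/
def listEdges (l : List V) : List (V × V) := l.zip l.tail

/-- The induced subgraph of `F` on the vertex set `c` is a simple directed path
(possibly a single vertex): there is a path spanning `c` whose edges are exactly
the edges of `F` incident to `c`. -/
def IsPathComponent (F : Finset (V × V)) (c : Finset V) : Prop :=
  ∃ l : List V, IsDiPath F l ∧ l.toFinset = c ∧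
    ∀ e ∈ F, (e.1 ∈ c ∨ e.2 ∈ c) → e ∈ listEdges l

/-- The weakly connected components of the digraph `F`, as a finite set of vertex sets. -/
noncomputable def weakComponents [Fintype V] (F : Finset (V × V)) : Finset (Finset V) :=
  Finset.univ.image (fun v => Finset.univ.filter (fun w => WReach F v w))

section ListEdges

variable {α : Type*} {l : List α} {y : α} {p : α × α}

@[simp]
lemma listEdges_cons_cons (a b : α) (t : List α) :
    listEdges (a :: b :: t) = (a, b) :: listEdges (b :: t) := rfl

lemma mem_of_mem_listEdges (h : p ∈ listEdges l) : p.1 ∈ l ∧ p.2 ∈ l :=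
  (List.of_mem_zip h).imp id List.mem_of_mem_tail

lemma List.IsChain.rel_of_mem_listEdges {R : α → α → Prop} :
    ∀ {l : List α}, l.IsChain R → p ∈ listEdges l → R p.1 p.2
  | [], _, h | [_], _, h => by simp [listEdges] at h
  | a :: b :: t, hl, h => by
    rw [List.isChain_cons_cons] at hl
    rcases List.mem_cons.1 (listEdges_cons_cons a b t ▸ h) with rfl | h
    · exact hl.1
    · exact hl.2.rel_of_mem_listEdges h

lemma exists_mem_listEdges_of_getLast?_ne :
    ∀ {l : List α}, y ∈ l → l.getLast? ≠ some y → ∃ z, (y, z) ∈ listEdges l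
  | [], hy, _ => by simp at hy
  | [_], hy, hne => by simp_all
  | a :: b :: t, hy, hne => by
    rw [List.getLast?_cons_cons] at hne
    rcases List.mem_cons.1 hy with rfl | hy
    · exact ⟨b, by simp⟩
    · obtain ⟨z, hz⟩ := exists_mem_listEdges_of_getLast?_ne hy hne
      exact ⟨z, by simp [hz]⟩

lemma exists_mem_listEdges_of_head?_ne :
    ∀ {l : List α}, y ∈ l → l.head? ≠ some y → ∃ x, (x, y) ∈ listEdges l
  | [], hy, _ => by simp at hy
  | [_], hy, hne => by simp_all
  | a :: b :: t, hy, hne => by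
    have hya : y ≠ a := fun h => hne (by simp [h])
    by_cases hyb : y = b
    · exact ⟨a, by simp [hyb]⟩
    · obtain ⟨x, hx⟩ := exists_mem_listEdges_of_head?_ne (l := b :: t)
        ((List.mem_cons.1 hy).resolve_left hya) (by simpa [eq_comm] using hyb)
      exact ⟨x, by simp [hx]⟩

lemma List.Nodup.getLast?_ne_fst :
    ∀ {l : List α}, l.Nodup → p ∈ listEdges l → l.getLast? ≠ some p.1
  | [], _, h | [_], _, h => by simp [listEdges] at h
  | a :: b :: t, hl, h => by
    rw [List.getLast?_cons_cons]
    rw [List.nodup_cons] at hl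
    rcases List.mem_cons.1 (listEdges_cons_cons a b t ▸ h) with rfl | h
    · exact fun hlast => hl.1 (List.mem_of_getLast? hlast)
    · exact hl.2.getLast?_ne_fst h

lemma List.Nodup.head?_ne_snd :
    ∀ {l : List α}, l.Nodup → p ∈ listEdges l → l.head? ≠ some p.2
  | [], _, h | [_], _, h => by simp [listEdges] at h
  | a :: b :: t, hl, h => by
    rw [List.head?_cons, Ne, Option.some_inj]
    rw [List.nodup_cons] at hl
    rcases List.mem_cons.1 (listEdges_cons_cons a b t ▸ h) with rfl | h
    · exact fun hab => hl.1 (hab ▸ List.mem_cons_self)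
    · exact fun hap => hl.1 (hap ▸ (mem_of_mem_listEdges h).2)

end ListEdges

section Digraph

variable {α : Type*} {F : Finset (α × α)} {l : List α} {a b u v : α}

def IsSink (F : Finset (α × α)) (v : α) : Prop := ∀ w, (v, w) ∉ F

def IsSource (F : Finset (α × α)) (v : α) : Prop := ∀ u, (u, v) ∉ F

lemma WReach.symm (h : WReach F a b) : WReach F b a := by
  induction h with
  | refl => exact .refl
  | tail _ hbc ih => exact .head hbc.symm ih

lemma WReach.trans {c : α} (hab : WReach F a b) (hbc : WReach F b c) : WReach F a c :=
  Relation.ReflTransGen.trans hab hbc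

lemma filter_wReach_eq_of_wReach [Fintype α] (h : WReach F a b) :
    Finset.univ.filter (WReach F a) = Finset.univ.filter (WReach F b) := by
  ext x
  simp only [Finset.mem_filter, Finset.mem_univ, true_and]
  exact ⟨h.symm.trans, h.trans⟩

lemma wReach_of_mem_of_isChain : ∀ {l : List α} {x y : α},
    l.IsChain (fun a b => (a, b) ∈ F) → x ∈ l → y ∈ l → WReach F x y
  | [], _, _, _, hx, _ => by simp at hx
  | [_], _, _, _, hx, hy => by simp only [List.mem_singleton] at hx hy; subst hx hy; exact .refl
  | a :: b :: t, x, y, hl, hx, hy => by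
    rw [List.isChain_cons_cons] at hl
    have hfrom_head : ∀ c ∈ a :: b :: t, WReach F a c := by
      intro c hc
      rcases List.mem_cons.1 hc with rfl | hc
      · exact .refl
      · exact .head (Or.inl hl.1) (wReach_of_mem_of_isChain hl.2 List.mem_cons_self hc)
    exact (hfrom_head x hx).symm.trans (hfrom_head y hy)

lemma List.IsChain.getLast?_eq_of_isSink (hl : l.IsChain (fun a b => (a, b) ∈ F))
    (hv : v ∈ l) (hsink : IsSink F v) : l.getLast? = some v := by
  by_contra hne
  obtain ⟨z, hz⟩ := exists_mem_listEdges_of_getLast?_ne hv hne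
  exact hsink z (hl.rel_of_mem_listEdges hz)

/-- `p` is not already on the path: it is not the last vertex (a sink), so its unique out-edge
would be the path edge leaving it, which cannot enter the head. -/
lemma IsDiPath.cons {p : α} (hR : Relator.RightUnique (fun a b => (a, b) ∈ F))
    (hl : IsDiPath F l) (hlast : ∀ v ∈ l.getLast?, IsSink F v) (hu : u ∈ l.head?)
    (hpu : (p, u) ∈ F) : IsDiPath F (p :: l) := by
  obtain ⟨hne, hnd, hch⟩ := hl
  refine ⟨List.cons_ne_nil _ _, List.nodup_cons.2 ⟨fun hp => ?_, hnd⟩, hch.cons ?_⟩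
  · have hp_last : l.getLast? ≠ some p := fun h => hlast p h _ hpu
    obtain ⟨z, hz⟩ := exists_mem_listEdges_of_getLast?_ne hp hp_last
    have hzu : z = u := hR (hch.rel_of_mem_listEdges hz) hpu
    exact hnd.head?_ne_snd hz (by simpa [hzu] using hu)
  · simpa [Option.mem_def] using fun w hw => (Option.some_inj.1 (hu.symm.trans hw)) ▸ hpu

lemma exists_isDiPath_of_isSink [Fintype α] (hR : Relator.RightUnique (fun a b => (a, b) ∈ F))
    (hv : IsSink F v) :
    ∃ l, IsDiPath F l ∧ (∀ u ∈ l.head?, IsSource F u) ∧ l.getLast? = some v := by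
  -- Walk backwards from `v`: the walk stays a path, so it reaches a source within `card α` steps.
  have grow : ∀ n : ℕ, ∃ l, IsDiPath F l ∧ l.getLast? = some v ∧
      ((∀ u ∈ l.head?, IsSource F u) ∨ n < l.length) := by
    intro n
    induction n with
    | zero =>
      exact ⟨[v], ⟨by simp, by simp, List.isChain_singleton v⟩, rfl, Or.inr (by simp)⟩
    | succ n ih =>
      obtain ⟨l, hl, hlast, hsrc | hlen⟩ := ih
      · exact ⟨l, hl, hlast, Or.inl hsrc⟩
      by_cases hsrc : ∀ u ∈ l.head?, IsSource F u
      · exact ⟨l, hl, hlast, Or.inl hsrc⟩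
      simp only [IsSource, not_forall, not_not] at hsrc
      obtain ⟨u, hu, p, hpu⟩ := hsrc
      refine ⟨p :: l, hl.cons hR (by simpa [hlast]) hu hpu, ?_, Or.inr (by simp only [List.length_cons]; omega)⟩
      simp [List.getLast?_cons, hlast]
  obtain ⟨l, hl, hlast, hsrc | hlen⟩ := grow (Fintype.card α)
  · exact ⟨l, hl, hsrc, hlast⟩
  · exact absurd hl.2.1.length_le_card (by omega)

lemma IsDiPath.mem_listEdges (hL : Relator.LeftUnique (fun a b => (a, b) ∈ F))
    (hR : Relator.RightUnique (fun a b => (a, b) ∈ F)) (hl : IsDiPath F l)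
    (hhead : ∀ u ∈ l.head?, IsSource F u) (hlast : ∀ v ∈ l.getLast?, IsSink F v)
    {e : α × α} (he : e ∈ F) (hinc : e.1 ∈ l ∨ e.2 ∈ l) : e ∈ listEdges l := by
  obtain ⟨x, y⟩ := e
  rcases hinc with hx | hy
  · obtain ⟨z, hz⟩ := exists_mem_listEdges_of_getLast?_ne hx fun h => hlast x h y he
    rwa [hR he (hl.2.2.rel_of_mem_listEdges hz)]
  · obtain ⟨w, hw⟩ := exists_mem_listEdges_of_head?_ne hy fun h => hhead y h x he
    rwa [hL he (hl.2.2.rel_of_mem_listEdges hw)]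

lemma card_filter_isSink [Fintype α] (hR : Relator.RightUnique (fun a b => (a, b) ∈ F)) :
    (Finset.univ.filter (IsSink F)).card = Fintype.card α - F.card := by
  have hnonsinks : Finset.univ.filter (fun v => ¬ IsSink F v) = F.image Prod.fst := by
    ext v
    simp [IsSink]
  have hinj : Set.InjOn Prod.fst (F : Set (α × α)) := by
    rintro ⟨x, y⟩ hxy ⟨x', y'⟩ hxy' (rfl : x = x')
    rw [hR (Finset.mem_coe.1 hxy) (Finset.mem_coe.1 hxy')]
  have hsplit := Finset.card_filter_add_card_filter_not (s := Finset.univ) (IsSink F)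
  rw [hnonsinks, Finset.card_image_of_injOn hinj, Finset.card_univ] at hsplit
  omega

end Digraph

section Components

variable {F : Finset (V × V)} {l : List V} {v : V}

lemma IsDiPath.filter_wReach_eq_toFinset [Fintype V]
    (hL : Relator.LeftUnique (fun a b => (a, b) ∈ F))
    (hR : Relator.RightUnique (fun a b => (a, b) ∈ F)) (hl : IsDiPath F l)
    (hhead : ∀ u ∈ l.head?, IsSource F u) (hlast : ∀ v ∈ l.getLast?, IsSink F v)
    (hv : v ∈ l) :
    Finset.univ.filter (WReach F v) = l.toFinset := by
  ext w
  simp only [Finset.mem_filter, Finset.mem_univ, true_and, List.mem_toFinset]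
  refine ⟨fun h => ?_, wReach_of_mem_of_isChain hl.2.2 hv⟩
  induction h with
  | refl => exact hv
  | tail _ hxy ih =>
    rcases hxy with h | h
    · exact (mem_of_mem_listEdges (hl.mem_listEdges hL hR hhead hlast h (Or.inl ih))).2
    · exact (mem_of_mem_listEdges (hl.mem_listEdges hL hR hhead hlast h (Or.inr ih))).1

lemma IsDiPath.isPathComponent [Fintype V]
    (hL : Relator.LeftUnique (fun a b => (a, b) ∈ F))
    (hR : Relator.RightUnique (fun a b => (a, b) ∈ F)) (hl : IsDiPath F l)
    (hhead : ∀ u ∈ l.head?, IsSource F u) (hlast : ∀ v ∈ l.getLast?, IsSink F v)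
    (hv : v ∈ l) :
    IsPathComponent F (Finset.univ.filter (WReach F v)) := by
  have hc := hl.filter_wReach_eq_toFinset hL hR hhead hlast hv
  refine ⟨l, hl, hc.symm, fun e he hinc => hl.mem_listEdges hL hR hhead hlast he ?_⟩
  simpa [hc] using hinc

lemma IsPathComponent.exists_isSink {c : Finset V} (hc : IsPathComponent F c) :
    ∃ g ∈ c, IsSink F g := by
  obtain ⟨l, ⟨hne, hnd, -⟩, rfl, hinc⟩ := hc
  obtain ⟨g, hg⟩ : ∃ g, l.getLast? = some g :=
    Option.isSome_iff_exists.1 (List.getLast?_isSome.2 hne)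
  have hgl := List.mem_of_getLast? hg
  refine ⟨g, List.mem_toFinset.2 hgl, fun w hw => ?_⟩
  exact hnd.getLast?_ne_fst (hinc _ hw (Or.inl (List.mem_toFinset.2 hgl))) hg

lemma card_filter_isPathComponent [Fintype V]
    (hL : Relator.LeftUnique (fun a b => (a, b) ∈ F))
    (hR : Relator.RightUnique (fun a b => (a, b) ∈ F)) :
    ((weakComponents F).filter (IsPathComponent F)).card =
      (Finset.univ.filter (IsSink F)).card := by
  symm
  refine Finset.card_bij (fun v _ => Finset.univ.filter (WReach F v)) ?_ ?_ ?_
  · intro v hv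
    obtain ⟨l, hl, hhead, hlast⟩ := exists_isDiPath_of_isSink hR (Finset.mem_filter.1 hv).2
    refine Finset.mem_filter.2 ⟨Finset.mem_image_of_mem _ (Finset.mem_univ v), ?_⟩
    exact hl.isPathComponent hL hR hhead (by simpa [hlast] using (Finset.mem_filter.1 hv).2)
      (List.mem_of_getLast? hlast)
  · intro v hv w hw hvw
    obtain ⟨l, hl, hhead, hlast⟩ := exists_isDiPath_of_isSink hR (Finset.mem_filter.1 hw).2
    have hvl : v ∈ l := by
      rw [← List.mem_toFinset, ← hl.filter_wReach_eq_toFinset hL hR hhead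
        (by simpa [hlast] using (Finset.mem_filter.1 hw).2) (List.mem_of_getLast? hlast)]
      exact hvw ▸ Finset.mem_filter.2 ⟨Finset.mem_univ v, .refl⟩
    exact Option.some_inj.1
      ((hl.2.2.getLast?_eq_of_isSink hvl (Finset.mem_filter.1 hv).2).symm.trans hlast)
  · intro c hc
    obtain ⟨hcomp, hpath⟩ := Finset.mem_filter.1 hc
    obtain ⟨v, -, rfl⟩ := Finset.mem_image.1 hcomp
    obtain ⟨g, hg, hsink⟩ := hpath.exists_isSink
    exact ⟨g, Finset.mem_filter.2 ⟨Finset.mem_univ g, hsink⟩,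
      (filter_wReach_eq_of_wReach (Finset.mem_filter.1 hg).2).symm⟩

end Components

section Matching

variable {E : Finset (V × V)} {M : Finset ((V ⊕ V) × (V ⊕ V))}

lemma rightUnique_pullback (hM : IsMatching M) :
    Relator.RightUnique (fun a b => (a, b) ∈ pullback E M) := by
  intro a b c hab hac
  by_contra hbc
  exact (hM _ (Finset.mem_filter.1 hab).2 _ (Finset.mem_filter.1 hac).2 (by simp [hbc])).1 rfl

lemma leftUnique_pullback (hM : IsMatching M) :
    Relator.LeftUnique (fun a b => (a, b) ∈ pullback E M) := by
  intro a b c hac hbc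
  by_contra hab
  exact (hM _ (Finset.mem_filter.1 hac).2 _ (Finset.mem_filter.1 hbc).2 (by simp [hab])).2.2.2 rfl

lemma card_pullback (hsub : M ⊆ splitEdges E) : (pullback E M).card = M.card := by
  have himage : (pullback E M).image (fun e => (Sum.inl e.1, Sum.inr e.2)) = M := by
    refine Finset.Subset.antisymm
      (Finset.image_subset_iff.2 fun e he => (Finset.mem_filter.1 he).2) fun m hm => ?_
    obtain ⟨e, he, rfl⟩ := Finset.mem_image.1 (hsub hm)
    exact Finset.mem_image_of_mem _ (Finset.mem_filter.2 ⟨he, hm⟩)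
  have hinj :
      Function.Injective (fun e : V × V => ((Sum.inl e.1 : V ⊕ V), (Sum.inr e.2 : V ⊕ V))) :=
    fun e e' h => by simpa [Prod.ext_iff] using h
  rw [← Finset.card_image_of_injective _ hinj, himage]

end Matching

theorem stmt1 [Fintype V] (E : Finset (V × V)) (M : Finset ((V ⊕ V) × (V ⊕ V)))
    (hsub : M ⊆ splitEdges E) (hmatch : IsMatching M) :
    ((weakComponents (pullback E M)).filter (IsPathComponent (pullback E M))).card =
      Fintype.card V - M.card := by
  rw [card_filter_isPathComponent (leftUnique_pullback hmatch) (rightUnique_pullback hmatch),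
    card_filter_isSink (rightUnique_pullback hmatch), card_pullback hsub]
end

section
/- For n ≥ 1, let G_n be the directed graph with 2n vertices v_1, …, v_n, u_1, …, u_n and edges v_i → v_{(i mod n)+1} for 1 ≤ i ≤ n and v_i → u_i for 1 ≤ i ≤ n (a directed n-cycle with one pendant out-neighbor attached to each cycle vertex). Then every path node cover of G_n contains at least n paths, and more generally every path-and-cycle cover of G_n contains at least n paths. -/
/-! A vertex without out-edges cannot lie on a cycle and can only be the last vertex of a path,
so distinct sinks end distinct paths of any PC cover. The `n` pendant vertices of `G_n` are sinks. -/

open scoped Classical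

variable {V : Type*} [DecidableEq V]

/-- The graph `G_n`: a directed `n`-cycle (on the left copy of `ZMod n`) with one pendant
out-neighbor (in the right copy) attached to each cycle vertex. -/
def gnEdges (n : ℕ) [NeZero n] : Finset ((ZMod n ⊕ ZMod n) × (ZMod n ⊕ ZMod n)) :=
  (Finset.univ.image fun i : ZMod n => (Sum.inl i, Sum.inl (i + 1))) ∪
  (Finset.univ.image fun i : ZMod n => (Sum.inl i, Sum.inr i))

theorem List.IsChain.eq_getLast_or_exists_rel {α : Type*} {R : α → α → Prop} {l : List α}
    (hl : l.IsChain R) {a : α} (ha : a ∈ l) : (∃ h : l ≠ [], a = l.getLast h) ∨ ∃ b, R a b := by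
  obtain ⟨i, hi, rfl⟩ := List.getElem_of_mem ha
  by_cases hlast : i + 1 < l.length
  · exact .inr ⟨_, List.isChain_iff_getElem.mp hl i hlast⟩
  · refine .inl ⟨List.ne_nil_of_mem ha, ?_⟩
    simp only [List.getLast_eq_getElem]
    congr 1
    omega

namespace PCCover

variable {E : Finset (V × V)} (C : PCCover E)

theorem mem_paths_getLast?_eq_of_sink {l : List V} (hl : l ∈ C.paths ∪ C.cycles) {v : V}
    (hv : v ∈ l) (hsink : ∀ w, (v, w) ∉ E) : l ∈ C.paths ∧ l.getLast? = some v := by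
  rcases Finset.mem_union.mp hl with hp | hc
  · obtain ⟨-, -, hchain⟩ := C.paths_are l hp
    rcases hchain.eq_getLast_or_exists_rel hv with ⟨hne, rfl⟩ | ⟨w, hw⟩
    · exact ⟨hp, List.getLast?_eq_some_getLast hne⟩
    · exact absurd hw (hsink w)
  · obtain ⟨_, -, hchain, hclose⟩ := C.cycles_are l hc
    rcases hchain.eq_getLast_or_exists_rel hv with ⟨_, rfl⟩ | ⟨w, hw⟩
    · exact absurd hclose (hsink _)
    · exact absurd hw (hsink w)

theorem card_le_card_paths_of_sinks {S : Finset V} (hS : ∀ v ∈ S, ∀ w, (v, w) ∉ E) :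
    S.card ≤ C.paths.card := by
  have hsub : S.map .some ⊆ C.paths.image List.getLast? := by
    intro x hx
    obtain ⟨v, hvS, rfl⟩ := Finset.mem_map.mp hx
    obtain ⟨l, hl, hvl⟩ := C.covers v
    obtain ⟨hlp, hlast⟩ := C.mem_paths_getLast?_eq_of_sink hl hvl (hS v hvS)
    exact Finset.mem_image.mpr ⟨l, hlp, hlast⟩
  calc S.card = (S.map .some).card := (Finset.card_map _).symm
    _ ≤ (C.paths.image List.getLast?).card := Finset.card_le_card hsub
    _ ≤ C.paths.card := Finset.card_image_le

end PCCover

theorem inr_notMem_gnEdges (n : ℕ) [NeZero n] (i : ZMod n) (w : ZMod n ⊕ ZMod n) :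
    (Sum.inr i, w) ∉ gnEdges n := by
  simp [gnEdges]

theorem stmt11 (n : ℕ) [NeZero n] :
    (∀ C : PCCover (gnEdges n), C.cycles = ∅ → n ≤ C.paths.card) ∧
    (∀ C : PCCover (gnEdges n), n ≤ C.paths.card) := by
  have h (C : PCCover (gnEdges n)) : n ≤ C.paths.card := by
    simpa [ZMod.card] using C.card_le_card_paths_of_sinks (S := Finset.univ.map .inr)
      (by simpa using inr_notMem_gnEdges n)
  exact ⟨fun C _ => h C, h⟩
end

section
/- Let Σ be a finite alphabet with |Σ| ≥ 2, let k ≥ 4, let n = |Σ|^{k−2}, and let S be a circular string of length n over Σ in which every string of length k−2 over Σ occurs exactly once as a circular substring (a de Bruijn sequence of order k−2). Let α be the string formed by the first k characters of S read circularly, and let X be the linear string S·α of length n + k. Then the k-mers of X are pairwise distinct except that the first and last k-mer coincide, X has exactly n distinct k-mers, and the order-k node-centric de Bruijn graph of {X} is a simple directed cycle of length n. -/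
/-- The list of all k-mer occurrences of `s` (the length-`k` substring at each
valid starting position). -/
def kmerList {α : Type*} (k : ℕ) (s : List α) : List (List α) :=
  (List.range (s.length + 1 - k)).map (fun i => (s.drop i).take k)

/-- `spec_k(I)`: the set of all k-mers of the strings of `I`. -/
def specK {α : Type*} [DecidableEq α] (k : ℕ) (I : Finset (List α)) : Finset (List α) :=
  I.biUnion (fun s => (kmerList k s).toFinset)

/-- `S` is a no-repetition SPSS of `I`: every string of `S` has length at least `k`,
every k-mer of `spec_k(I)` occurs at exactly one position in exactly one string of `S`,
and no other k-mer occurs in any string of `S`. -/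
def IsNoRepSPSS {α : Type*} [DecidableEq α] (k : ℕ) (I S : Finset (List α)) : Prop :=
  (∀ s ∈ S, k ≤ s.length) ∧
  (∀ w ∈ specK k I, ∃ s ∈ S, ∃ i : ℕ, i + k ≤ s.length ∧ (s.drop i).take k = w) ∧
  (∀ s ∈ S, ∀ t ∈ S, ∀ i j : ℕ, i + k ≤ s.length → j + k ≤ t.length →
    (s.drop i).take k = (t.drop j).take k → s = t ∧ i = j) ∧
  (∀ s ∈ S, ∀ i : ℕ, i + k ≤ s.length → (s.drop i).take k ∈ specK k I)

/-- `L` is a simple directed path (possibly a single vertex) in the order-`k` node-centric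
de Bruijn graph of `I`: a nonempty duplicate-free list of vertices (k-mers of `I`) in which the
length-`(k-1)` suffix of each member equals the length-`(k-1)` prefix of the next. -/
def IsDBGPath {α : Type*} [DecidableEq α] (k : ℕ) (I : Finset (List α))
    (L : List (List α)) : Prop :=
  L ≠ [] ∧ L.Nodup ∧ (∀ w ∈ L, w ∈ specK k I) ∧
  L.Chain' (fun u v => u.drop (u.length - (k - 1)) = v.take (k - 1))

/-- A path node cover of the order-`k` node-centric de Bruijn graph of `I`: a collection of
vertex-disjoint simple directed paths whose vertex sets partition `spec_k(I)`. -/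
def IsPathNodeCover {α : Type*} [DecidableEq α] (k : ℕ) (I : Finset (List α))
    (P : Finset (List (List α))) : Prop :=
  (∀ L ∈ P, IsDBGPath k I L) ∧
  (∀ L₁ ∈ P, ∀ L₂ ∈ P, L₁ ≠ L₂ → ∀ w ∈ L₁, w ∉ L₂) ∧
  (∀ w ∈ specK k I, ∃ L ∈ P, w ∈ L)

/-- The circular substring of length `m` of the circular string `s` (of length `n`)
starting at position `i`. -/
def circSub {α : Type*} {n : ℕ} (s : ZMod n → α) (i : ZMod n) (m : ℕ) : List α :=
  (List.range m).map (fun j => s (i + (j : ZMod n)))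

/-!
Every window of length `k - 2` of the de Bruijn sequence `s` occurs exactly once, so the map
`i ↦ circSub s i m` is injective for every `m ≥ k - 2`. Since `X` unrolls `s` for `n + k`
steps, its k-mer at position `i` is the circular window of length `k` at `i mod n`; hence the
k-mers of `X` are indexed by `ZMod n`, repeating only at positions `0` and `n`. The suffix of
length `k - 1` of the window at `i` is the window of length `k - 1` at `i + 1`, and by
injectivity it is the prefix of the window at `j` only for `j = i + 1`.
-/

open Function

lemma mem_specK_singleton {α : Type*} [DecidableEq α] (k : ℕ) (x w : List α) :
    w ∈ specK k {x} ↔ ∃ i, i + k ≤ x.length ∧ (x.drop i).take k = w := by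
  simp only [specK, Finset.singleton_biUnion, kmerList, List.mem_toFinset, List.mem_map,
    List.mem_range]
  refine exists_congr fun i => and_congr_left fun _ => ?_
  omega

lemma ZMod.eq_or_of_natCast_eq_of_le {n i j : ℕ} (hi : i ≤ n) (hj : j ≤ n)
    (h : (i : ZMod n) = j) : i = j ∨ (i = 0 ∧ j = n) ∨ (i = n ∧ j = 0) := by
  have hmod := (ZMod.natCast_eq_natCast_iff' i j n).mp h
  rcases hi.lt_or_eq with hi | rfl <;> rcases hj.lt_or_eq with hj | rfl
  · rw [Nat.mod_eq_of_lt hi, Nat.mod_eq_of_lt hj] at hmod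
    exact .inl hmod
  · rw [Nat.mod_eq_of_lt hi, Nat.mod_self] at hmod
    exact .inr (.inl ⟨hmod, rfl⟩)
  · rw [Nat.mod_eq_of_lt hj, Nat.mod_self] at hmod
    exact .inr (.inr ⟨rfl, hmod.symm⟩)
  · exact .inl rfl

namespace circSub

variable {α : Type*} {n : ℕ} (s : ZMod n → α)

-- The cast `(j : ZMod n)` in `circSub` is elaborated as a monadic lift of `List.range m`.
lemma eq_map_range (i : ZMod n) (m : ℕ) :
    circSub s i m = (List.range m).map (fun j : ℕ => s (i + (j : ZMod n))) :=
  (congrArg _ (List.flatMap_pure_eq_map _ _)).trans (List.map_map ..)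

@[simp]
lemma length (i : ZMod n) (m : ℕ) : (circSub s i m).length = m := by
  simp [eq_map_range]

@[simp]
lemma getElem (i : ZMod n) (m j : ℕ) (h : j < (circSub s i m).length) :
    (circSub s i m)[j] = s (i + (j : ZMod n)) := by
  simp only [eq_map_range, List.getElem_map, List.getElem_range]

lemma take {t m : ℕ} (h : t ≤ m) (i : ZMod n) : (circSub s i m).take t = circSub s i t :=
  List.ext_getElem (by simp [h]) fun j _ _ => by simp

lemma drop (i : ZMod n) (t m : ℕ) : (circSub s i m).drop t = circSub s (i + t) (m - t) :=
  List.ext_getElem (by simp) fun j _ _ => by simp [add_assoc]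

lemma take_drop (i : ZMod n) {t m N : ℕ} (h : t + m ≤ N) :
    ((circSub s i N).drop t).take m = circSub s (i + t) m := by
  rw [drop, take s (by omega)]

lemma injective_of_le {m m' : ℕ} (h : m ≤ m') (hinj : Injective (circSub s · m)) :
    Injective (circSub s · m') := fun i j hij => hinj <| by
  simpa only [take s h] using congrArg (List.take m) hij

lemma mem_specK_iff [DecidableEq α] [NeZero n] (k : ℕ) (w : List α) :
    w ∈ specK k {circSub s 0 (n + k)} ↔ ∃ i : ZMod n, circSub s i k = w := by
  simp only [mem_specK_singleton, length]
  constructor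
  · rintro ⟨i, hi, rfl⟩
    exact ⟨i, by rw [take_drop s 0 hi, zero_add]⟩
  · rintro ⟨i, rfl⟩
    refine ⟨i.val, by have := i.val_lt; omega, ?_⟩
    rw [take_drop s 0 (by have := i.val_lt; omega), zero_add, ZMod.natCast_zmod_val]

lemma eq_or_of_take_drop_eq {k : ℕ} (hinj : Injective (circSub s · k)) {i j : ℕ}
    (hi : i + k ≤ n + k) (hj : j + k ≤ n + k)
    (h : ((circSub s 0 (n + k)).drop i).take k = ((circSub s 0 (n + k)).drop j).take k) :
    i = j ∨ (i = 0 ∧ j = n) ∨ (i = n ∧ j = 0) := by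
  rw [take_drop s 0 hi, take_drop s 0 hj, zero_add, zero_add] at h
  exact ZMod.eq_or_of_natCast_eq_of_le (by omega) (by omega) (hinj h)

lemma card_specK [DecidableEq α] [NeZero n] {k : ℕ} (hinj : Injective (circSub s · k)) :
    (specK k {circSub s 0 (n + k)}).card = n := by
  have himage : specK k {circSub s 0 (n + k)} = Finset.univ.image (circSub s · k) := by
    ext w
    simp [mem_specK_iff]
  rw [himage, Finset.card_image_of_injective _ hinj, Finset.card_univ, ZMod.card]

lemma drop_eq_take_iff {k : ℕ} (hk : 1 ≤ k) (hinj : Injective (circSub s · (k - 1)))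
    (i j : ZMod n) :
    (circSub s i k).drop ((circSub s i k).length - (k - 1)) = (circSub s j k).take (k - 1) ↔
      j = i + 1 := by
  rw [length, show k - (k - 1) = 1 by omega, drop, take s (Nat.sub_le k 1), Nat.cast_one]
  exact ⟨fun h => (hinj h).symm, fun h => h ▸ rfl⟩

end circSub

theorem stmt12_general {α : Type*} [Fintype α] [DecidableEq α]
    (k n : ℕ) (hk : 4 ≤ k) (hn : n = Fintype.card α ^ (k - 2))
    (s : ZMod n → α)
    (hdb : ∀ w : List α, w.length = k - 2 → ∃! i : ZMod n, circSub s i (k - 2) = w)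
    (X : List α) (hX : X = (List.range (n + k)).map (fun j => s (j : ZMod n))) :
    X.take k = (X.drop n).take k ∧
    (∀ i j : ℕ, i + k ≤ X.length → j + k ≤ X.length →
      (X.drop i).take k = (X.drop j).take k →
      i = j ∨ (i = 0 ∧ j = n) ∨ (i = n ∧ j = 0)) ∧
    (specK k {X}).card = n ∧
    ∃ f : ZMod n → List α, Function.Injective f ∧
      (∀ w : List α, w ∈ specK k {X} ↔ ∃ i : ZMod n, f i = w) ∧
      (∀ i j : ZMod n,
        ((f i).drop ((f i).length - (k - 1)) = (f j).take (k - 1)) ↔ j = i + 1) := by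
  have : NeZero n := ⟨hn ▸ (pow_pos (Fintype.card_pos_iff.2 ⟨s 0⟩) _).ne'⟩
  have hinj : ∀ m, k - 2 ≤ m → Injective (circSub s · m) := fun m hm =>
    circSub.injective_of_le s hm fun i j hij => (hdb _ (circSub.length s j _)).unique hij rfl
  obtain rfl : X = circSub s 0 (n + k) := by simp [circSub, hX]
  refine ⟨?_, fun i j hi hj h => ?_, circSub.card_specK s (hinj k (by omega)),
    (circSub s · k), hinj k (by omega), circSub.mem_specK_iff s k,
    circSub.drop_eq_take_iff s (by omega) (hinj _ (by omega))⟩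
  · rw [circSub.take s (by omega), circSub.take_drop s 0 le_rfl, zero_add, ZMod.natCast_self]
  · rw [circSub.length] at hi hj
    exact circSub.eq_or_of_take_drop_eq s (hinj k (by omega)) hi hj h

theorem stmt12 {α : Type*} [Fintype α] [DecidableEq α] (hcard : 2 ≤ Fintype.card α)
    (k n : ℕ) (hk : 4 ≤ k) (hn : n = Fintype.card α ^ (k - 2))
    (s : ZMod n → α)
    (hdb : ∀ w : List α, w.length = k - 2 → ∃! i : ZMod n, circSub s i (k - 2) = w)
    (X : List α) (hX : X = (List.range (n + k)).map (fun j => s (j : ZMod n))) :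
    X.take k = (X.drop n).take k ∧
    (∀ i j : ℕ, i + k ≤ X.length → j + k ≤ X.length →
      (X.drop i).take k = (X.drop j).take k →
      i = j ∨ (i = 0 ∧ j = n) ∨ (i = n ∧ j = 0)) ∧
    (specK k {X}).card = n ∧
    ∃ f : ZMod n → List α, Function.Injective f ∧
      (∀ w : List α, w ∈ specK k {X} ↔ ∃ i : ZMod n, f i = w) ∧
      (∀ i j : ZMod n,
        ((f i).drop ((f i).length - (k - 1)) = (f j).take (k - 1)) ↔ j = i + 1) :=
  stmt12_general k n hk hn s hdb X hX
end

section
/- For every integer k ≥ 4, setting n = 4^{k−2}, there exists a finite set I of strings over the four-letter alphabet {A, C, G, T} with exactly 2n distinct k-mers such that the order-k node-centric de Bruijn graph of I is isomorphic to the graph G_n consisting of a directed n-cycle with one pendant out-neighbor attached to each cycle vertex, and consequently every no-repetition SPSS of I has weight at least 2n + (k − 1)·n = (k + 1)·n. -/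
open Function

variable {α : Type*}

/-- For `N = |α| ^ M` this says that `u` is a de Bruijn sequence of order `M`. -/
def HasDistinctWindows (u : ℕ → α) (N M : ℕ) : Prop :=
  Periodic u N ∧ ∀ a b, (∀ j < M, u (a + j) = u (b + j)) → a ≡ b [MOD N]

lemma HasDistinctWindows.comp {β : Type*} {u : ℕ → α} {N M : ℕ}
    (hu : HasDistinctWindows u N M) {e : α → β} (he : Injective e) :
    HasDistinctWindows (e ∘ u) N M :=
  ⟨fun i => congrArg e (hu.1 i), fun a b h => hu.2 a b fun j hj => he (h j hj)⟩

/-- The `(P + 1)`-periodic sequence with period `z, t 0, …, t (P - 1)`. -/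
def consPeriodic (z : α) (t : ℕ → α) (P : ℕ) (i : ℕ) : α :=
  match i % (P + 1) with
  | 0 => z
  | n + 1 => t n

section consPeriodic

variable {z : α} {t : ℕ → α} {P M : ℕ}

lemma consPeriodic_periodic : Periodic (consPeriodic z t P) (P + 1) := by
  intro i
  simp only [consPeriodic, Nat.add_mod_right]

lemma consPeriodic_of_lt {i : ℕ} (hi : i < P) : consPeriodic z t P (i + 1) = t i := by
  have h : (i + 1) % (P + 1) = i + 1 := Nat.mod_eq_of_lt (by omega)
  simp only [consPeriodic, h]

lemma consPeriodic_eq_of_lt (ht_per : Periodic t P) (ht_zero : ∀ i, i + 1 < M → t i = z)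
    (hMP : M ≤ P) {a j : ℕ} (ha : a < P) (hj : j < M) :
    consPeriodic z t P (a + 1 + j) = t (a + j) := by
  by_cases h : a + j < P
  · rw [show a + 1 + j = a + j + 1 by omega, consPeriodic_of_lt h]
  · obtain ⟨r, hr⟩ : ∃ r, a + j = r + P := ⟨a + j - P, by omega⟩
    rw [show a + 1 + j = r + (P + 1) by omega, consPeriodic_periodic, hr, ht_per,
      ht_zero r (by omega)]
    rcases r with _ | r
    · simp [consPeriodic]
    · rw [consPeriodic_of_lt (by omega), ht_zero r (by omega)]

lemma hasDistinctWindows_consPeriodic (ht_per : Periodic t P)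
    (ht_zero : ∀ i, i + 1 < M → t i = z)
    (ht_ne : ∀ a, ∃ j < M, t (a + j) ≠ z)
    (ht_inj : ∀ a b, (∀ j < M, t (a + j) = t (b + j)) → a ≡ b [MOD P]) (hMP : M ≤ P) :
    HasDistinctWindows (consPeriodic z t P) (P + 1) M := by
  refine ⟨consPeriodic_periodic, ?_⟩
  have hzero : ∀ j < M, consPeriodic z t P (0 + j) = z := by
    rintro (_ | j) hj
    · simp [consPeriodic]
    · rw [zero_add, consPeriodic_of_lt (by omega), ht_zero j hj]
  have hglue {a j : ℕ} (ha : a < P) (hj : j < M) :=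
    consPeriodic_eq_of_lt (z := z) ht_per ht_zero hMP ha hj
  suffices key : ∀ a b, a < P + 1 → b < P + 1 →
      (∀ j < M, consPeriodic z t P (a + j) = consPeriodic z t P (b + j)) → a = b by
    intro a b h
    refine key _ _ (Nat.mod_lt _ P.succ_pos) (Nat.mod_lt _ P.succ_pos) fun j hj => ?_
    rw [← consPeriodic_periodic.map_mod_nat, Nat.mod_add_mod, consPeriodic_periodic.map_mod_nat,
      ← consPeriodic_periodic.map_mod_nat (b % _ + j), Nat.mod_add_mod,
      consPeriodic_periodic.map_mod_nat, h j hj]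
  have hne (a : ℕ) (ha : a < P) :
      ¬ ∀ j < M, consPeriodic z t P (a + 1 + j) = consPeriodic z t P (0 + j) := by
    intro h
    obtain ⟨j, hj, hne⟩ := ht_ne a
    exact hne (by rw [← hglue ha hj, h j hj, hzero j hj])
  rintro (_ | a) (_ | b) ha hb h
  · rfl
  · exact absurd (fun j hj => (h j hj).symm) (hne b (by omega))
  · exact absurd h (hne a (by omega))
  · have := ht_inj a b fun j hj => by
      rw [← hglue (by omega) hj, ← hglue (by omega) hj, h j hj]
    rw [Nat.ModEq, Nat.mod_eq_of_lt (by omega), Nat.mod_eq_of_lt (by omega)] at this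
    rw [this]

end consPeriodic

section FiniteField

variable {K L : Type*} [Field K] [Field L] [Algebra K L]

lemma PowerBasis.eq_zero_of_forall_map_gen_pow_mul_eq_zero (pb : PowerBasis K L)
    {φ : L →ₗ[K] K} (hφ : φ ≠ 0) {x : L} (hx : ∀ j < pb.dim, φ (pb.gen ^ j * x) = 0) :
    x = 0 := by
  by_contra hx0
  have hψ : φ ∘ₗ LinearMap.mulRight K x = 0 :=
    pb.basis.ext fun i => by simpa [pb.basis_eq_pow] using hx i i.isLt
  refine hφ (LinearMap.ext fun y => ?_)
  simpa [mul_assoc, inv_mul_cancel₀ hx0] using LinearMap.congr_fun hψ (y * x⁻¹)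

lemma PowerBasis.exists_map_gen_pow_add_ne_zero (pb : PowerBasis K L) {φ : L →ₗ[K] K}
    (hφ : φ ≠ 0) (hgen : pb.gen ≠ 0) (a : ℕ) :
    ∃ j < pb.dim, φ (pb.gen ^ (a + j)) ≠ 0 := by
  by_contra! h
  exact pow_ne_zero a hgen (pb.eq_zero_of_forall_map_gen_pow_mul_eq_zero hφ fun j hj => by
    rw [← pow_add, add_comm, h j hj])

lemma PowerBasis.gen_pow_eq_gen_pow (pb : PowerBasis K L) {φ : L →ₗ[K] K} (hφ : φ ≠ 0)
    {a b : ℕ} (h : ∀ j < pb.dim, φ (pb.gen ^ (a + j)) = φ (pb.gen ^ (b + j))) :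
    pb.gen ^ a = pb.gen ^ b := by
  rw [← sub_eq_zero]
  refine pb.eq_zero_of_forall_map_gen_pow_mul_eq_zero hφ fun j hj => ?_
  rw [mul_sub, map_sub, ← pow_add, ← pow_add, add_comm j, add_comm j, h j hj, sub_self]

lemma adjoin_eq_top_of_forall_mem_zpowers [Finite L] {g : Lˣ}
    (hg : ∀ x, x ∈ Subgroup.zpowers g) : Algebra.adjoin K {(g : L)} = ⊤ := by
  rw [eq_top_iff]
  rintro x -
  rcases eq_or_ne x 0 with rfl | hx
  · exact Subalgebra.zero_mem _
  · obtain ⟨n, hn⟩ := (mem_powers_iff_mem_zpowers).2 (hg (Units.mk0 x hx))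
    rw [← Units.val_mk0 hx, ← hn, Units.val_pow_eq_pow_val]
    exact pow_mem (Algebra.subset_adjoin (Set.mem_singleton _)) n

/-- With `φ` the last coordinate for the power basis of a generator `g` of `Lˣ`, the m-sequence
`i ↦ φ (g ^ i)` starts with `finrank K L - 1` zeros and runs through every nonzero window once
per period `|L| - 1`; one extra zero in front of each period makes it a de Bruijn sequence. -/
theorem exists_hasDistinctWindows_finrank [Finite L] :
    ∃ u : ℕ → K, HasDistinctWindows u (Nat.card L) (Module.finrank K L) := by
  obtain ⟨g, hg⟩ := IsCyclic.exists_generator (α := Lˣ)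
  let pb := PowerBasis.ofAdjoinEqTop (IsIntegral.of_finite K (g : L))
    (adjoin_eq_top_of_forall_mem_zpowers hg)
  have hgen : pb.gen = g := rfl
  have hdim_pos : 0 < pb.dim := pb.dim_pos
  let φ := pb.basis.coord ⟨pb.dim - 1, by omega⟩
  have hφ : ∀ i < pb.dim, φ ((g : L) ^ i) = if i = pb.dim - 1 then 1 else 0 := fun i hi => by
    rw [← hgen, ← pb.basis_eq_pow ⟨i, hi⟩, Module.Basis.coord_apply, pb.basis.repr_self,
      Finsupp.single_apply]
    simp only [Fin.ext_iff]
  have hφ0 : φ ≠ 0 := fun h => by simpa [h] using hφ (pb.dim - 1) (by omega)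
  have hcard : orderOf g + 1 = Nat.card L := by
    rw [orderOf_eq_card_of_forall_mem_zpowers hg, Nat.card_units]
    have := Finite.one_lt_card (α := L)
    omega
  have hdim : pb.dim ≤ orderOf g := by
    have : Finite K := Finite.of_injective _ (algebraMap K L).injective
    have hL := Module.natCard_eq_pow_finrank (K := K) (V := L)
    rw [pb.finrank, ← hcard] at hL
    have := Nat.lt_pow_self (n := pb.dim) (Finite.one_lt_card (α := K))
    omega
  rw [pb.finrank, ← hcard]
  refine ⟨_, hasDistinctWindows_consPeriodic (z := 0) (t := fun i => φ ((g : L) ^ i))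
    (fun i => ?_) (fun i hi => ?_) (pb.exists_map_gen_pow_add_ne_zero hφ0 g.ne_zero)
    (fun a b h => ?_) hdim⟩
  · simp only [pow_add, ← Units.val_pow_eq_pow_val g (orderOf g), pow_orderOf_eq_one,
      Units.val_one, mul_one]
  · simp [hφ i (by omega), show i ≠ pb.dim - 1 by omega]
  · rw [← pow_eq_pow_iff_modEq, ← Units.val_inj, Units.val_pow_eq_pow_val,
      Units.val_pow_eq_pow_val]
    exact pb.gen_pow_eq_gen_pow hφ0 h

end FiniteField

theorem exists_hasDistinctWindows_of_card_eq_prime_pow {p n : ℕ} [Fact p.Prime]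
    (hα : Nat.card α = p ^ n) (hn : n ≠ 0) {m : ℕ} (hm : m ≠ 0) :
    ∃ u : ℕ → α, HasDistinctWindows u (Nat.card α ^ m) m := by
  let K := GaloisField p n
  let L := GaloisField p (n * m)
  have hKL : Module.finrank (ZMod p) K ∣ Module.finrank (ZMod p) L := by
    rw [GaloisField.finrank p hn, GaloisField.finrank p (mul_ne_zero hn hm)]
    exact dvd_mul_right n m
  obtain ⟨f⟩ := FiniteField.nonempty_algHom_of_finrank_dvd hKL
  let := f.toRingHom.toAlgebra
  have hcardK : Nat.card K = p ^ n := GaloisField.card p n hn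
  have hcardL : Nat.card L = Nat.card K ^ m := by
    rw [GaloisField.card p _ (mul_ne_zero hn hm), hcardK, pow_mul]
  have hfinrank : Module.finrank K L = m := by
    have := Module.natCard_eq_pow_finrank (K := K) (V := L)
    rw [hcardL] at this
    exact Nat.pow_right_injective (hcardK ▸ Nat.one_lt_pow hn (Fact.out : p.Prime).one_lt)
      this.symm
  have : Finite α := Nat.finite_of_card_ne_zero (by simp [hα, (Fact.out : p.Prime).ne_zero])
  obtain ⟨u, hu⟩ := exists_hasDistinctWindows_finrank (K := K) (L := L)
  obtain ⟨e⟩ := Finite.card_eq.mp (hcardK.trans hα.symm)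
  rw [hcardL, hfinrank, hcardK, ← hα] at hu
  exact ⟨_, hu.comp e.injective⟩

def window (s : ℕ → α) (len i : ℕ) : List α := (List.range' i len).map s

section window

variable {s : ℕ → α}

@[simp]
lemma length_window (len i : ℕ) : (window s len i).length = len := by simp [window]

lemma window_succ (len i : ℕ) : window s (len + 1) i = s i :: window s len (i + 1) := by
  simp [window, List.range'_succ]

lemma window_succ' (len i : ℕ) : window s (len + 1) i = window s len i ++ [s (i + len)] := by
  simp [window, List.range'_concat]

lemma window_eq_window_iff {len a b : ℕ} :
    window s len a = window s len b ↔ ∀ j < len, s (a + j) = s (b + j) := by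
  simp [window, List.ext_getElem_iff]

end window

namespace HasDistinctWindows

variable {s : ℕ → α} {N m : ℕ}

lemma apply_eq_apply (hs : HasDistinctWindows s N m) {a b : ℕ} (hab : a ≡ b [MOD N]) :
    s a = s b := by
  rw [← hs.1.map_mod_nat a, ← hs.1.map_mod_nat b, hab]

lemma window_eq_window_iff (hs : HasDistinctWindows s N m) {len a b : ℕ} (hlen : m ≤ len) :
    window s len a = window s len b ↔ a ≡ b [MOD N] := by
  rw [_root_.window_eq_window_iff]
  exact ⟨fun h => hs.2 a b fun j hj => h j (by omega),
    fun hab j _ => hs.apply_eq_apply (hab.add_right j)⟩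

lemma eq_of_window_append_eq_window (hs : HasDistinctWindows s N m) {a b : ℕ} {c : α}
    (h : window s m a ++ [c] = window s (m + 1) b) : c = s (a + m) := by
  rw [window_succ'] at h
  obtain ⟨hab, hc⟩ := List.append_inj h (by simp)
  rw [List.singleton_inj.mp hc]
  exact hs.apply_eq_apply (((hs.window_eq_window_iff le_rfl).mp hab).symm.add_right m)

end HasDistinctWindows

def DBGAdj (k : ℕ) (u v : List α) : Prop :=
  u.drop (u.length - (k - 1)) = v.take (k - 1)

lemma specK_eq_self [DecidableEq α] {k : ℕ} {I : Finset (List α)}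
    (hI : ∀ s ∈ I, s.length = k) : specK k I = I := by
  ext w
  simp only [specK, kmerList, Finset.mem_biUnion, List.mem_toFinset, List.mem_map, List.mem_range]
  constructor
  · rintro ⟨s, hs, i, hi, rfl⟩
    obtain rfl : i = 0 := by have := hI s hs; omega
    simpa [List.take_of_length_le (hI s hs).le] using hs
  · intro hw
    exact ⟨w, hw, 0, by simp [hI w hw], by simp [List.take_of_length_le (hI w hw).le]⟩

namespace IsNoRepSPSS

variable [DecidableEq α] {k : ℕ} {I S : Finset (List α)}

lemma card_specK_le (hS : IsNoRepSPSS k I S) :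
    (specK k I).card ≤ ∑ t ∈ S, (t.length + 1 - k) := by
  calc (specK k I).card
      ≤ (S.sigma fun t => Finset.range (t.length + 1 - k)).card :=
        Finset.card_le_card_of_surjOn (fun p => (p.1.drop p.2).take k) fun w hw => by
          obtain ⟨s, hs, i, hi, rfl⟩ := hS.2.1 w hw
          refine ⟨⟨s, i⟩, ?_, rfl⟩
          simp only [Finset.coe_sigma, Set.mem_sigma_iff, Finset.mem_coe, Finset.mem_range]
          exact ⟨hs, by omega⟩
    _ = ∑ t ∈ S, (t.length + 1 - k) := by simp [Finset.card_sigma]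

lemma add_eq_length_of_forall_not_dbgAdj (hS : IsNoRepSPSS k I S) {s : List α} (hs : s ∈ S)
    {i : ℕ} (hi : i + k ≤ s.length)
    (hsink : ∀ v ∈ specK k I, ¬ DBGAdj k ((s.drop i).take k) v) : i + k = s.length := by
  by_contra hne
  refine hsink _ (hS.2.2.2 s hs (i + 1) (by omega)) ?_
  rcases k with _ | k
  · simp [DBGAdj]
  · simp only [DBGAdj, List.length_take, List.length_drop, List.drop_take, List.take_take,
      List.drop_drop]
    congr 2 <;> omega

lemma card_le_card (hS : IsNoRepSPSS k I S) {W : Finset (List α)} (hW : W ⊆ specK k I)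
    (hsink : ∀ w ∈ W, ∀ v ∈ specK k I, ¬ DBGAdj k w v) : W.card ≤ S.card :=
  Finset.card_le_card_of_surjOn (fun s => s.drop (s.length - k)) fun w hw => by
    obtain ⟨s, hs, i, hi, rfl⟩ := hS.2.1 w (hW hw)
    have hend := hS.add_eq_length_of_forall_not_dbgAdj hs hi (hsink _ hw)
    refine ⟨s, hs, ?_⟩
    rw [List.take_of_length_le (by simp; omega)]
    exact congrArg s.drop (by omega)

theorem card_specK_add_le_sum_length (hS : IsNoRepSPSS k I S) (hk : 0 < k)
    {W : Finset (List α)} (hW : W ⊆ specK k I)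
    (hsink : ∀ w ∈ W, ∀ v ∈ specK k I, ¬ DBGAdj k w v) :
    (specK k I).card + (k - 1) * W.card ≤ ∑ t ∈ S, t.length := by
  calc (specK k I).card + (k - 1) * W.card
      ≤ ∑ t ∈ S, (t.length + 1 - k) + (k - 1) * S.card :=
        add_le_add hS.card_specK_le (Nat.mul_le_mul_left _ (hS.card_le_card hW hsink))
    _ = ∑ t ∈ S, t.length := by
        rw [mul_comm, ← smul_eq_mul, ← Finset.sum_const, ← Finset.sum_add_distrib]
        exact Finset.sum_congr rfl fun t ht => by have := hS.1 t ht; omega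

end IsNoRepSPSS

/-- `inl i` is the `i`-th vertex of the cycle and `inr i` the pendant attached to it; `σ` alters
the pendant's last letter so that it has no out-neighbour. -/
def cycleWithPendants (s : ℕ → α) (σ : α → α) (m N : ℕ) : ZMod N ⊕ ZMod N → List α
  | .inl i => window s (m + 2) i.val
  | .inr i => window s (m + 1) (i.val + 1) ++ [σ (s (i.val + m + 2))]

namespace cycleWithPendants

variable {s : ℕ → α} {σ : α → α} {m N : ℕ}

@[simp]
lemma length (x : ZMod N ⊕ ZMod N) : (cycleWithPendants s σ m N x).length = m + 2 := by
  cases x <;> simp [cycleWithPendants]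

lemma take_inl (i : ZMod N) :
    (cycleWithPendants s σ m N (.inl i)).take (m + 1) = window s (m + 1) i.val := by
  rw [cycleWithPendants, window_succ', List.take_left' (length_window _ _)]

lemma take_inr (i : ZMod N) :
    (cycleWithPendants s σ m N (.inr i)).take (m + 1) = window s (m + 1) (i.val + 1) := by
  rw [cycleWithPendants, List.take_left' (length_window _ _)]

lemma drop_inl (i : ZMod N) :
    (cycleWithPendants s σ m N (.inl i)).drop 1 = window s (m + 1) (i.val + 1) := by
  rw [cycleWithPendants, window_succ, List.drop_one, List.tail_cons]

lemma drop_inr (i : ZMod N) : (cycleWithPendants s σ m N (.inr i)).drop 1 =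
    window s m (i.val + 2) ++ [σ (s (i.val + m + 2))] := by
  rw [cycleWithPendants, window_succ, List.cons_append, List.drop_one, List.tail_cons]

lemma specK_image [DecidableEq α] [NeZero N] :
    specK (m + 2) (Finset.univ.image (cycleWithPendants s σ m N)) =
      Finset.univ.image (cycleWithPendants s σ m N) :=
  specK_eq_self fun _ hw => by
    obtain ⟨x, -, rfl⟩ := Finset.mem_image.mp hw
    exact length x

variable (hs : HasDistinctWindows s N m) (hσ : ∀ c, σ c ≠ c)
include hs hσ

lemma drop_inr_ne_window (i : ZMod N) (j : ℕ) :
    (cycleWithPendants s σ m N (.inr i)).drop 1 ≠ window s (m + 1) j := by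
  rw [drop_inr]
  intro h
  exact hσ _ (by rw [hs.eq_of_window_append_eq_window h]; ring_nf)

variable [NeZero N]

lemma dbgAdj_iff (x y : ZMod N ⊕ ZMod N) :
    DBGAdj (m + 2) (cycleWithPendants s σ m N x) (cycleWithPendants s σ m N y) ↔
      (∃ i, x = .inl i ∧ y = .inl (i + 1)) ∨ (∃ i, x = .inl i ∧ y = .inr i) := by
  have hwin (a b : ℕ) := hs.window_eq_window_iff (len := m + 1) (a := a) (b := b) (by omega)
  rcases x with a | a <;> rcases y with b | b <;>
    simp only [DBGAdj, length, show m + 2 - 1 = m + 1 from rfl,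
      show m + 2 - (m + 1) = 1 by omega]
  · rw [drop_inl, take_inl, hwin, ← ZMod.natCast_eq_natCast_iff]
    push_cast
    simp [eq_comm]
  · rw [drop_inl, take_inr, hwin, ← ZMod.natCast_eq_natCast_iff]
    push_cast
    simp [eq_comm]
  · rw [take_inl]
    simpa using drop_inr_ne_window hs hσ a _
  · rw [take_inr]
    simpa using drop_inr_ne_window hs hσ a _

lemma not_dbgAdj_inr (i : ZMod N) (y : ZMod N ⊕ ZMod N) :
    ¬ DBGAdj (m + 2) (cycleWithPendants s σ m N (.inr i)) (cycleWithPendants s σ m N y) := by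
  simp [dbgAdj_iff hs hσ]

lemma injective : Injective (cycleWithPendants s σ m N) := by
  have hval (a b : ZMod N) (h : a.val + 1 ≡ b.val + 1 [MOD N]) : a = b := by
    rwa [← ZMod.natCast_eq_natCast_iff, Nat.cast_add, Nat.cast_add, ZMod.natCast_zmod_val,
      ZMod.natCast_zmod_val, add_left_inj] at h
  rintro (a | a) (b | b) h
  · rw [cycleWithPendants, cycleWithPendants, hs.window_eq_window_iff (by omega)] at h
    exact congrArg _ (hval a b (h.add_right 1))
  · have h' := congrArg (List.drop 1) h
    rw [drop_inl] at h'
    exact (drop_inr_ne_window hs hσ b _ h'.symm).elim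
  · have h' := congrArg (List.drop 1) h
    rw [drop_inl] at h'
    exact (drop_inr_ne_window hs hσ a _ h').elim
  · have h' := congrArg (List.take (m + 1)) h
    rw [take_inr, take_inr, hs.window_eq_window_iff (by omega)] at h'
    exact congrArg _ (hval a b h')

end cycleWithPendants

theorem stmt14 (k : ℕ) (hk : 4 ≤ k) :
    ∃ I : Finset (List (Fin 4)),
      (specK k I).card = 2 * 4 ^ (k - 2) ∧
      (∃ f : (ZMod (4 ^ (k - 2)) ⊕ ZMod (4 ^ (k - 2))) → List (Fin 4),
        Function.Injective f ∧
        (∀ w : List (Fin 4), w ∈ specK k I ↔ ∃ x, f x = w) ∧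
        (∀ x y, ((f x).drop ((f x).length - (k - 1)) = (f y).take (k - 1)) ↔
          ((∃ i : ZMod (4 ^ (k - 2)), x = Sum.inl i ∧ y = Sum.inl (i + 1)) ∨
           (∃ i : ZMod (4 ^ (k - 2)), x = Sum.inl i ∧ y = Sum.inr i)))) ∧
      ∀ S : Finset (List (Fin 4)), IsNoRepSPSS k I S →
        (k + 1) * 4 ^ (k - 2) ≤ ∑ t ∈ S, t.length := by
  obtain ⟨m, rfl⟩ : ∃ m, k = m + 2 := ⟨k - 2, by omega⟩
  simp only [Nat.add_sub_cancel]
  obtain ⟨s, hs⟩ := exists_hasDistinctWindows_of_card_eq_prime_pow (α := Fin 4) (p := 2)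
    (n := 2) (by simp) two_ne_zero (m := m) (by omega)
  rw [Nat.card_eq_fintype_card, Fintype.card_fin] at hs
  have hσ : ∀ c : Fin 4, c + 1 ≠ c := by decide
  set f := cycleWithPendants s (· + 1) m (4 ^ m)
  have hinj : Injective f := cycleWithPendants.injective hs hσ
  have hspec : specK (m + 2) (Finset.univ.image f) = Finset.univ.image f :=
    cycleWithPendants.specK_image
  have hmem (w : List (Fin 4)) : w ∈ specK (m + 2) (Finset.univ.image f) ↔ ∃ x, f x = w := by
    simp [hspec]
  refine ⟨Finset.univ.image f, ?_, ⟨f, hinj, hmem, cycleWithPendants.dbgAdj_iff hs hσ⟩,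
    fun S hS => ?_⟩
  · rw [hspec, Finset.card_image_of_injective _ hinj]
    simp [ZMod.card, two_mul]
  · have hsinks : ∀ w ∈ Finset.univ.image (f ∘ .inr),
        ∀ v ∈ specK (m + 2) (Finset.univ.image f), ¬ DBGAdj (m + 2) w v := by
      simp only [hspec, Finset.mem_image, Finset.mem_univ, true_and, comp_apply]
      rintro _ ⟨i, rfl⟩ _ ⟨y, rfl⟩
      exact cycleWithPendants.not_dbgAdj_inr hs hσ i y
    have := hS.card_specK_add_le_sum_length (by omega)
      (by simp [hspec, Finset.image_subset_iff]) hsinks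
    rw [hspec, Finset.card_image_of_injective _ hinj,
      Finset.card_image_of_injective _ (hinj.comp Sum.inr_injective)] at this
    simp only [Finset.card_univ, Fintype.card_sum, ZMod.card] at this
    rw [show m + 2 - 1 = m + 1 from rfl] at this
    linarith
end

section
/- Let G be a finite directed graph. For every necklace cover of G with N_O open necklaces and N_L pendant leaves, G admits a path-and-cycle cover with exactly N_O + N_L paths; consequently, the minimum number of paths p_min over all PC covers of G satisfies p_min ≤ N_O + N_L for every necklace cover of G. -/
open scoped Classical

variable {V : Type*} [DecidableEq V]

/-- `H = (verts, edges)` is a necklace of the digraph `E`: a weakly connected subgraph of `E`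
in which every vertex has in-degree at most one. -/
def IsNecklace (E : Finset (V × V)) (H : Finset V × Finset (V × V)) : Prop :=
  H.1.Nonempty ∧ H.2 ⊆ E ∧ (∀ e ∈ H.2, e.1 ∈ H.1 ∧ e.2 ∈ H.1) ∧
  (∀ a ∈ H.1, ∀ b ∈ H.1,
    Relation.ReflTransGen (fun x y => (x, y) ∈ H.2 ∨ (y, x) ∈ H.2) a b) ∧
  (∀ v ∈ H.1, indeg H.2 v ≤ 1)

/-- A necklace is closed if it contains a directed cycle (and open otherwise). -/
def IsClosedNecklace (H : Finset V × Finset (V × V)) : Prop :=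
  ∃ l : List V, IsDiCycle H.2 l

/-- `C` is a necklace cover of the digraph `E`: a collection of necklaces with pairwise
disjoint vertex sets covering every vertex. -/
def IsNecklaceCover (E : Finset (V × V)) (C : Finset (Finset V × Finset (V × V))) : Prop :=
  (∀ H ∈ C, IsNecklace E H) ∧
  (∀ H₁ ∈ C, ∀ H₂ ∈ C, H₁ ≠ H₂ → Disjoint H₁.1 H₂.1) ∧
  (∀ v : V, ∃ H ∈ C, v ∈ H.1)

/-- `N_O`: the number of open necklaces of the cover `C`. -/
noncomputable def numOpen (C : Finset (Finset V × Finset (V × V))) : ℕ :=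
  (C.filter (fun H => ¬ IsClosedNecklace H)).card

/-- Total number of vertices of out-degree zero within their necklace, over the cover `C`. -/
def numSinks (C : Finset (Finset V × Finset (V × V))) : ℕ :=
  ∑ H ∈ C, (H.1.filter (fun v => outdeg H.2 v = 0)).card

/-- `N_L`: the number of pendant leaves of the cover `C` (total number of out-degree-zero
vertices within their necklace, minus the number of open necklaces). -/
noncomputable def numLeaves (C : Finset (Finset V × Finset (V × V))) : ℕ :=
  numSinks C - numOpen C

/-!
Choose, at every vertex with an out-edge in its necklace, one such edge. The chosen edges form a
subgraph `F` in which every vertex has in- and out-degree at most one, and whose sinks are those of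
the necklaces. Such an `F` splits into disjoint paths and cycles with exactly one path per sink:
add the edges one at a time; a new edge `(u, v)` leads from the end of a path to the start of a
path, and either closes that path into a cycle or joins two paths into one. Finally the number of
sinks is `N_O + N_L` because every open necklace has a sink: otherwise the same decomposition,
applied to a necklace without sinks, would consist of cycles only.
-/
namespace List

variable {α : Type*} {R : α → α → Prop} {l : List α} {u : α}

theorem IsChain.getLast?_eq_or_exists_rel (h : l.IsChain R) (hu : u ∈ l) :
    l.getLast? = some u ∨ ∃ w, R u w := by
  obtain ⟨s, t, rfl⟩ := List.append_of_mem hu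
  rcases t with _ | ⟨w, t⟩
  · simp
  · exact Or.inr ⟨w, isChain_pair.1 (h.infix ⟨s, t, by simp⟩)⟩

theorem IsChain.head?_eq_or_exists_rel (h : l.IsChain R) (hu : u ∈ l) :
    l.head? = some u ∨ ∃ w, R w u := by
  obtain ⟨s, t, rfl⟩ := List.append_of_mem hu
  rcases s.eq_nil_or_concat with rfl | ⟨s, w, rfl⟩
  · simp
  · exact Or.inr ⟨w, isChain_pair.1 (h.infix ⟨s, t, by simp⟩)⟩

end List

section DiGraph

variable {α : Type*} {E F : Finset (α × α)} {l : List α}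

theorem IsDiPath.mono (hFE : F ⊆ E) (h : IsDiPath F l) : IsDiPath E l :=
  ⟨h.1, h.2.1, List.IsChain.imp (fun _ _ hab => hFE hab) h.2.2⟩

theorem IsDiCycle.mono (hFE : F ⊆ E) (h : IsDiCycle F l) : IsDiCycle E l :=
  let ⟨hne, hnd, hch, hcl⟩ := h
  ⟨hne, hnd, List.IsChain.imp (fun _ _ hab => hFE hab) hch, hFE hcl⟩

theorem IsDiCycle.map {β : Type*} {G : Finset (β × β)} {f : α → β}
    (hf : Function.Injective f) (hfG : ∀ a b, (a, b) ∈ F → (f a, f b) ∈ G)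
    (h : IsDiCycle F l) : IsDiCycle G (l.map f) := by
  obtain ⟨hne, hnd, hch, hcl⟩ := h
  refine ⟨by simpa using hne, hnd.map hf, List.isChain_map_of_isChain f hfG hch, ?_⟩
  simpa [List.getLast_map, List.head_map] using hfG _ _ hcl

end DiGraph

section Degrees

variable {F : Finset (V × V)}

theorem outdeg_eq_zero_iff {v : V} : outdeg F v = 0 ↔ ∀ w, (v, w) ∉ F := by
  simp only [outdeg, Finset.card_eq_zero, Finset.filter_eq_empty_iff]
  exact ⟨fun h w hw => h hw rfl, fun h e he hev => h e.2 (hev ▸ he)⟩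

theorem eq_of_indeg_le_one {a b c : V} (h : indeg F c ≤ 1) (ha : (a, c) ∈ F)
    (hb : (b, c) ∈ F) : a = b := by
  have := Finset.card_le_one.1 h (a, c) (by simp [ha]) (b, c) (by simp [hb])
  simpa using this

end Degrees

namespace PCCover

variable {E F : Finset (V × V)}

def mono (hFE : F ⊆ E) (D : PCCover F) : PCCover E where
  paths := D.paths
  cycles := D.cycles
  paths_are l hl := (D.paths_are l hl).mono hFE
  cycles_are l hl := (D.cycles_are l hl).mono hFE
  disj := D.disj
  pairwiseDisj := D.pairwiseDisj
  covers := D.covers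

def singletons [Fintype V] : PCCover (∅ : Finset (V × V)) where
  paths := Finset.univ.image fun v => [v]
  cycles := ∅
  paths_are l hl := by
    obtain ⟨v, -, rfl⟩ := Finset.mem_image.1 hl
    exact ⟨List.cons_ne_nil v [], List.nodup_singleton v, List.isChain_singleton v⟩
  cycles_are l hl := absurd hl (Finset.notMem_empty l)
  disj := Finset.disjoint_empty_right _
  pairwiseDisj l₁ h₁ l₂ h₂ hne v hv₁ hv₂ := by
    simp only [Finset.union_empty, Finset.mem_image, Finset.mem_univ, true_and] at h₁ h₂
    obtain ⟨a, rfl⟩ := h₁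
    obtain ⟨b, rfl⟩ := h₂
    simp_all
  covers v := ⟨[v], by simp, List.mem_singleton_self v⟩

theorem card_paths_singletons [Fintype V] :
    (singletons : PCCover (∅ : Finset (V × V))).paths.card = Fintype.card V :=
  Finset.card_image_of_injective _ fun _ _ h => List.singleton_inj.1 h

variable (D : PCCover F)

theorem exists_path_getLast?_eq {u : V} (hu : ∀ w, (u, w) ∉ F) :
    ∃ P ∈ D.paths, P.getLast? = some u := by
  obtain ⟨l, hl, hul⟩ := D.covers u
  rcases Finset.mem_union.1 hl with hP | hC
  · rcases (D.paths_are l hP).2.2.getLast?_eq_or_exists_rel hul with h | ⟨w, hw⟩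
    exacts [⟨l, hP, h⟩, absurd hw (hu w)]
  · obtain ⟨hne, -, hch, hcl⟩ := D.cycles_are l hC
    rcases List.IsChain.getLast?_eq_or_exists_rel hch hul with h | ⟨w, hw⟩
    · rw [List.getLast?_eq_some_getLast hne, Option.some_inj] at h
      exact absurd hcl (h ▸ hu _)
    · exact absurd hw (hu w)

theorem exists_path_head?_eq {v : V} (hv : ∀ w, (w, v) ∉ F) :
    ∃ Q ∈ D.paths, Q.head? = some v := by
  obtain ⟨l, hl, hvl⟩ := D.covers v
  rcases Finset.mem_union.1 hl with hP | hC
  · rcases (D.paths_are l hP).2.2.head?_eq_or_exists_rel hvl with h | ⟨w, hw⟩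
    exacts [⟨l, hP, h⟩, absurd hw (hv w)]
  · obtain ⟨hne, -, hch, hcl⟩ := D.cycles_are l hC
    rcases List.IsChain.head?_eq_or_exists_rel hch hvl with h | ⟨w, hw⟩
    · rw [List.head?_eq_some_head hne, Option.some_inj] at h
      exact absurd hcl (h ▸ hv _)
    · exact absurd hw (hv w)

variable {u v : V}

theorem exists_close_path {P : List V} (hP : P ∈ D.paths) (hlast : P.getLast? = some u)
    (hhead : P.head? = some v) :
    ∃ D' : PCCover (insert (u, v) F), D'.paths.card + 1 = D.paths.card := by
  have hsub : F ⊆ insert (u, v) F := Finset.subset_insert _ _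
  have hunion : D.paths.erase P ∪ insert P D.cycles = D.paths ∪ D.cycles := by
    ext l
    simp only [Finset.mem_union, Finset.mem_erase, Finset.mem_insert]
    by_cases hl : l = P <;> simp [hl, hP]
  refine ⟨{ paths := D.paths.erase P, cycles := insert P D.cycles,
            paths_are := fun l hl => (D.paths_are l (Finset.mem_of_mem_erase hl)).mono hsub,
            cycles_are := ?_, disj := ?_,
            pairwiseDisj := hunion ▸ D.pairwiseDisj, covers := hunion ▸ D.covers },
          Finset.card_erase_add_one hP⟩
  · intro l hl
    rcases Finset.mem_insert.1 hl with rfl | hl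
    · obtain ⟨hne, hnd, hch⟩ := D.paths_are l hP
      refine ⟨hne, hnd, hch.imp fun _ _ hab => hsub hab, ?_⟩
      rw [List.getLast?_eq_some_getLast hne, Option.some_inj] at hlast
      rw [List.head?_eq_some_head hne, Option.some_inj] at hhead
      simp [hlast, hhead]
    · exact (D.cycles_are l hl).mono hsub
  · rw [Finset.disjoint_insert_right]
    exact ⟨Finset.notMem_erase P _,
      Finset.disjoint_of_subset_left (Finset.erase_subset _ _) D.disj⟩

theorem exists_join_paths {P Q : List V} (hP : P ∈ D.paths) (hQ : Q ∈ D.paths) (hPQ : P ≠ Q)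
    (hlast : P.getLast? = some u) (hhead : Q.head? = some v) :
    ∃ D' : PCCover (insert (u, v) F), D'.paths.card + 1 = D.paths.card := by
  have hsub : F ⊆ insert (u, v) F := Finset.subset_insert _ _
  have hP' : P ∈ D.paths ∪ D.cycles := Finset.mem_union_left _ hP
  have hQ' : Q ∈ D.paths ∪ D.cycles := Finset.mem_union_left _ hQ
  have hQne : Q ≠ [] := by rintro rfl; simp at hhead
  have hjoin_disj :
      ∀ l ∈ D.paths ∪ D.cycles, l ≠ P → l ≠ Q → ∀ x ∈ l, x ∉ P ++ Q :=
    fun l hl hlP hlQ x hx hxPQ => (List.mem_append.1 hxPQ).elim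
      (D.pairwiseDisj l hl P hP' hlP x hx) (D.pairwiseDisj l hl Q hQ' hlQ x hx)
  have hjoin_new : P ++ Q ∉ D.paths ∪ D.cycles := fun h =>
    D.pairwiseDisj _ h P hP' (mt List.append_right_eq_self.1 hQne) u
      (List.mem_append_left Q (List.mem_of_getLast? hlast)) (List.mem_of_getLast? hlast)
  have hmem : ∀ l, l ∈ insert (P ++ Q) ((D.paths.erase P).erase Q) ∪ D.cycles ↔
      l = P ++ Q ∨ (l ∈ D.paths ∪ D.cycles ∧ l ≠ P ∧ l ≠ Q) := by
    intro l
    have hPc : P ∉ D.cycles := Finset.disjoint_left.1 D.disj hP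
    have hQc : Q ∉ D.cycles := Finset.disjoint_left.1 D.disj hQ
    simp only [Finset.mem_union, Finset.mem_insert, Finset.mem_erase]
    constructor
    · rintro ((h | ⟨hlQ, hlP, h⟩) | h)
      · exact Or.inl h
      · exact Or.inr ⟨Or.inl h, hlP, hlQ⟩
      · exact Or.inr ⟨Or.inr h, fun e => hPc (e ▸ h), fun e => hQc (e ▸ h)⟩
    · rintro (h | ⟨h | h, hlP, hlQ⟩)
      exacts [Or.inl (Or.inl h), Or.inl (Or.inr ⟨hlQ, hlP, h⟩), Or.inr h]
  refine ⟨{ paths := insert (P ++ Q) ((D.paths.erase P).erase Q), cycles := D.cycles,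
            paths_are := ?_, cycles_are := fun l hl => (D.cycles_are l hl).mono hsub,
            disj := ?_, pairwiseDisj := ?_, covers := ?_ }, ?_⟩
  · intro l hl
    rcases Finset.mem_insert.1 hl with rfl | hl
    · obtain ⟨hPne, hPnd, hPch⟩ := D.paths_are P hP
      obtain ⟨-, hQnd, hQch⟩ := D.paths_are Q hQ
      refine ⟨by simp [hPne], List.nodup_append.2 ⟨hPnd, hQnd, ?_⟩, ?_⟩
      · rintro a ha _ hb rfl
        exact D.pairwiseDisj P hP' Q hQ' hPQ a ha hb
      · refine (hPch.imp fun _ _ h => hsub h).append (hQch.imp fun _ _ h => hsub h) ?_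
        simp [hlast, hhead]
    · exact (D.paths_are l (Finset.mem_of_mem_erase (Finset.mem_of_mem_erase hl))).mono hsub
  · rw [Finset.disjoint_insert_left]
    exact ⟨fun h => hjoin_new (Finset.mem_union_right _ h), Finset.disjoint_of_subset_left
      ((Finset.erase_subset _ _).trans (Finset.erase_subset _ _)) D.disj⟩
  · intro l₁ h₁ l₂ h₂ hne x hx₁ hx₂
    rcases (hmem l₁).1 h₁ with rfl | ⟨h₁, hP₁, hQ₁⟩ <;>
      rcases (hmem l₂).1 h₂ with rfl | ⟨h₂, hP₂, hQ₂⟩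
    · exact hne rfl
    · exact hjoin_disj l₂ h₂ hP₂ hQ₂ x hx₂ hx₁
    · exact hjoin_disj l₁ h₁ hP₁ hQ₁ x hx₁ hx₂
    · exact D.pairwiseDisj l₁ h₁ l₂ h₂ hne x hx₁ hx₂
  · intro x
    obtain ⟨l, hl, hxl⟩ := D.covers x
    by_cases hlPQ : l = P ∨ l = Q
    · refine ⟨P ++ Q, (hmem _).2 (Or.inl rfl), ?_⟩
      rcases hlPQ with rfl | rfl <;> simp [hxl]
    · exact ⟨l, (hmem l).2 (Or.inr ⟨hl, not_or.1 hlPQ⟩), hxl⟩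
  · have hnotin : P ++ Q ∉ (D.paths.erase P).erase Q := fun h =>
      hjoin_new (Finset.mem_union_left _ (Finset.mem_of_mem_erase (Finset.mem_of_mem_erase h)))
    rw [Finset.card_insert_of_notMem hnotin,
      Finset.card_erase_add_one (Finset.mem_erase.2 ⟨hPQ.symm, hQ⟩),
      Finset.card_erase_add_one hP]

end PCCover

def sinks [Fintype V] (F : Finset (V × V)) : Finset V :=
  Finset.univ.filter fun v => outdeg F v = 0

theorem sinks_insert [Fintype V] {F : Finset (V × V)} (u v : V) :
    sinks (insert (u, v) F) = (sinks F).erase u := by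
  ext x
  simp only [sinks, Finset.mem_filter, Finset.mem_univ, true_and, Finset.mem_erase,
    outdeg_eq_zero_iff, Finset.mem_insert, not_or, Prod.mk.injEq, forall_and]
  exact ⟨fun ⟨h₁, h₂⟩ => ⟨fun hxu => h₁ v ⟨hxu, rfl⟩, h₂⟩,
    fun ⟨h₁, h₂⟩ => ⟨fun _ h => h₁ h.1, h₂⟩⟩

theorem exists_pcCover_card_paths_eq_card_sinks [Fintype V] (F : Finset (V × V))
    (hin : ∀ a b c, (a, c) ∈ F → (b, c) ∈ F → a = b)
    (hout : ∀ a b c, (a, b) ∈ F → (a, c) ∈ F → b = c) :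
    ∃ D : PCCover F, D.paths.card = (sinks F).card := by
  induction F using Finset.induction_on with
  | empty => exact ⟨PCCover.singletons, by simp [PCCover.card_paths_singletons, sinks, outdeg]⟩
  | @insert e F he ih =>
    obtain ⟨u, v⟩ := e
    have hsub : F ⊆ insert (u, v) F := Finset.subset_insert _ _
    obtain ⟨D, hD⟩ := ih (fun a b c ha hb => hin a b c (hsub ha) (hsub hb))
      (fun a b c ha hb => hout a b c (hsub ha) (hsub hb))
    have hu : ∀ w, (u, w) ∉ F := fun w hw =>
      he (hout u w v (hsub hw) (Finset.mem_insert_self _ _) ▸ hw)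
    have hv : ∀ w, (w, v) ∉ F := fun w hw =>
      he (hin w u v (hsub hw) (Finset.mem_insert_self _ _) ▸ hw)
    obtain ⟨P, hP, hlast⟩ := D.exists_path_getLast?_eq hu
    obtain ⟨Q, hQ, hhead⟩ := D.exists_path_head?_eq hv
    obtain ⟨D', hD'⟩ :
        ∃ D' : PCCover (insert (u, v) F), D'.paths.card + 1 = D.paths.card := by
      by_cases hPQ : P = Q
      · exact D.exists_close_path hP hlast (hPQ ▸ hhead)
      · exact D.exists_join_paths hP hQ hPQ hlast hhead
    have hu_sink : u ∈ sinks F := by simpa [sinks, outdeg_eq_zero_iff] using hu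
    refine ⟨D', ?_⟩
    rw [sinks_insert, Finset.card_erase_of_mem hu_sink]
    omega

theorem exists_subset_functional_outdeg_eq_zero_iff (G : Finset (V × V)) :
    ∃ F ⊆ G, (∀ a b c, (a, b) ∈ F → (a, c) ∈ F → b = c) ∧
      ∀ v, outdeg F v = 0 ↔ outdeg G v = 0 := by
  have : ∀ v, ∃ w, ∀ w', (v, w') ∈ G → (v, w) ∈ G := fun v => by
    by_cases h : ∃ w', (v, w') ∈ G
    · exact ⟨h.choose, fun _ _ => h.choose_spec⟩
    · exact ⟨v, fun w' hw' => absurd ⟨w', hw'⟩ h⟩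
  choose succ hsucc using this
  refine ⟨G.filter fun e => e.2 = succ e.1, Finset.filter_subset _ _, ?_, fun v => ?_⟩
  · intro a b c hb hc
    exact (Finset.mem_filter.1 hb).2.trans (Finset.mem_filter.1 hc).2.symm
  · simp only [outdeg_eq_zero_iff, Finset.mem_filter, not_and]
    exact ⟨fun h w hw => h (succ v) (hsucc v w hw) rfl, fun h w hw => absurd hw (h w)⟩

theorem exists_isDiCycle_of_forall_exists_mem {S : Finset V} (hS : S.Nonempty)
    {G : Finset (V × V)} (hin : ∀ a b c, (a, c) ∈ G → (b, c) ∈ G → a = b)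
    (hsucc : ∀ v ∈ S, ∃ w ∈ S, (v, w) ∈ G) : ∃ l, IsDiCycle G l := by
  -- Work on the subtype `S`: in `V`, the vertices outside `S` would be sinks, hence ends of paths.
  let G' : Finset (S × S) := Finset.univ.filter fun e => (e.1.1, e.2.1) ∈ G
  have hG' : ∀ {a b : S}, (a, b) ∈ G' ↔ (a.1, b.1) ∈ G := by simp [G']
  obtain ⟨F, hFG, hFfun, hFsinks⟩ := exists_subset_functional_outdeg_eq_zero_iff G'
  obtain ⟨D, hD⟩ := exists_pcCover_card_paths_eq_card_sinks F
    (fun a b c ha hb => Subtype.ext (hin _ _ _ (hG'.1 (hFG ha)) (hG'.1 (hFG hb)))) hFfun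
  have hno_sinks : sinks F = ∅ := by
    refine Finset.filter_eq_empty_iff.2 fun x _ hx => ?_
    obtain ⟨w, hw, hxw⟩ := hsucc x.1 x.2
    exact outdeg_eq_zero_iff.1 ((hFsinks x).1 hx) ⟨w, hw⟩ (hG'.2 hxw)
  rw [hno_sinks, Finset.card_empty, Finset.card_eq_zero] at hD
  obtain ⟨v, hv⟩ := hS
  obtain ⟨l, hl, -⟩ := D.covers ⟨v, hv⟩
  rw [hD, Finset.empty_union] at hl
  exact ⟨l.map Subtype.val, (D.cycles_are l hl).map Subtype.val_injective
    fun a b hab => hG'.1 (hFG hab)⟩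

theorem IsNecklace.sinks_nonempty_of_not_closed {E : Finset (V × V)}
    {H : Finset V × Finset (V × V)} (hH : IsNecklace E H) (hopen : ¬ IsClosedNecklace H) :
    (H.1.filter fun v => outdeg H.2 v = 0).Nonempty := by
  obtain ⟨hne, -, hends, -, hindeg⟩ := hH
  by_contra hempty
  rw [Finset.not_nonempty_iff_eq_empty, Finset.filter_eq_empty_iff] at hempty
  refine hopen (exists_isDiCycle_of_forall_exists_mem hne
    (fun a b c ha hb => eq_of_indeg_le_one (hindeg c (hends _ ha).2) ha hb) fun v hv => ?_)
  obtain ⟨w, hw⟩ := not_forall_not.1 (mt outdeg_eq_zero_iff.2 (hempty hv))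
  exact ⟨w, (hends _ hw).2, hw⟩

namespace IsNecklaceCover

variable {E : Finset (V × V)} {C : Finset (Finset V × Finset (V × V))}

theorem numOpen_le_numSinks (hC : IsNecklaceCover E C) : numOpen C ≤ numSinks C := by
  calc numOpen C = ∑ H ∈ C.filter (fun H => ¬ IsClosedNecklace H), 1 := by
        rw [numOpen, Finset.card_eq_sum_ones]
    _ ≤ ∑ H ∈ C.filter (fun H => ¬ IsClosedNecklace H),
          (H.1.filter fun v => outdeg H.2 v = 0).card := by
        refine Finset.sum_le_sum fun H hH => ?_
        rw [Finset.mem_filter] at hH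
        exact Finset.card_pos.2 ((hC.1 H hH.1).sinks_nonempty_of_not_closed hH.2)
    _ ≤ numSinks C := Finset.sum_le_sum_of_subset (Finset.filter_subset _ _)

theorem eq_of_mem_of_mem (hC : IsNecklaceCover E C) {H₁ H₂ : Finset V × Finset (V × V)}
    (hH₁ : H₁ ∈ C) (hH₂ : H₂ ∈ C) {v : V} (hv₁ : v ∈ H₁.1) (hv₂ : v ∈ H₂.1) :
    H₁ = H₂ := by
  by_contra hne
  exact Finset.disjoint_left.1 (hC.2.1 _ hH₁ _ hH₂ hne) hv₁ hv₂

theorem biUnion_subset (hC : IsNecklaceCover E C) : C.biUnion Prod.snd ⊆ E :=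
  Finset.biUnion_subset.2 fun H hH => (hC.1 H hH).2.1

theorem eq_of_mem_biUnion (hC : IsNecklaceCover E C) {a b c : V}
    (ha : (a, c) ∈ C.biUnion Prod.snd) (hb : (b, c) ∈ C.biUnion Prod.snd) : a = b := by
  obtain ⟨H₁, hH₁, ha⟩ := Finset.mem_biUnion.1 ha
  obtain ⟨H₂, hH₂, hb⟩ := Finset.mem_biUnion.1 hb
  obtain ⟨-, -, hends, -, hindeg⟩ := hC.1 H₂ hH₂
  obtain rfl := hC.eq_of_mem_of_mem hH₁ hH₂ ((hC.1 H₁ hH₁).2.2.1 _ ha).2 (hends _ hb).2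
  exact eq_of_indeg_le_one (hindeg c (hends _ hb).2) ha hb

theorem mem_biUnion_iff (hC : IsNecklaceCover E C) {H : Finset V × Finset (V × V)}
    (hH : H ∈ C) {v w : V} (hv : v ∈ H.1) :
    (v, w) ∈ C.biUnion Prod.snd ↔ (v, w) ∈ H.2 := by
  refine ⟨fun h => ?_, fun h => Finset.mem_biUnion.2 ⟨H, hH, h⟩⟩
  obtain ⟨H', hH', h⟩ := Finset.mem_biUnion.1 h
  rwa [hC.eq_of_mem_of_mem hH' hH ((hC.1 H' hH').2.2.1 _ h).1 hv] at h

theorem card_sinks_biUnion [Fintype V] (hC : IsNecklaceCover E C) :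
    (sinks (C.biUnion Prod.snd)).card = numSinks C := by
  have hsinks : sinks (C.biUnion Prod.snd) =
      C.biUnion fun H => H.1.filter fun v => outdeg H.2 v = 0 := by
    ext v
    obtain ⟨H, hH, hv⟩ := hC.2.2 v
    simp only [sinks, Finset.mem_filter, Finset.mem_univ, true_and, Finset.mem_biUnion]
    simp only [outdeg_eq_zero_iff, hC.mem_biUnion_iff hH hv]
    refine ⟨fun h => ⟨H, hH, hv, h⟩, fun ⟨H', hH', hv', h⟩ => ?_⟩
    rwa [hC.eq_of_mem_of_mem hH hH' hv hv']
  rw [hsinks, numSinks, Finset.card_biUnion]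
  exact fun H₁ h₁ H₂ h₂ hne => Finset.disjoint_filter_filter (hC.2.1 _ h₁ _ h₂ hne)

end IsNecklaceCover

theorem stmt16 [Fintype V] (E : Finset (V × V))
    (C : Finset (Finset V × Finset (V × V))) (hC : IsNecklaceCover E C) :
    (∃ D : PCCover E, D.paths.card = numOpen C + numLeaves C) ∧
    (∀ pmin : ℕ, IsLeast {m : ℕ | ∃ D : PCCover E, D.paths.card = m} pmin →
      pmin ≤ numOpen C + numLeaves C) := by
  obtain ⟨F, hFG, hFfun, hFsinks⟩ :=
    exists_subset_functional_outdeg_eq_zero_iff (C.biUnion Prod.snd)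
  obtain ⟨D, hD⟩ := exists_pcCover_card_paths_eq_card_sinks F
    (fun a b c ha hb => hC.eq_of_mem_biUnion (hFG ha) (hFG hb)) hFfun
  have hsinks : sinks F = sinks (C.biUnion Prod.snd) := Finset.filter_congr fun v _ => hFsinks v
  have hcard : D.paths.card = numOpen C + numLeaves C := by
    rw [hD, hsinks, hC.card_sinks_biUnion, numLeaves]
    have := hC.numOpen_le_numSinks
    omega
  let D' : PCCover E := D.mono (hFG.trans hC.biUnion_subset)
  exact ⟨⟨D', hcard⟩, fun pmin hpmin => hpmin.2 ⟨D', hcard⟩⟩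
end
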